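/- arXiv:1404.7770 — 3 statements merged into one kernel-verified Lean document; each statement's English description precedes it below -/
import Mathlib

section
/- For every finite game structure G with recurring certainty defined as below, the set of plays of G in which the grand coalition has recurring certainty is recognisable by a deterministic Büchi automaton; that is, there exist a finite state set Q, an initial state q₀ ∈ Q, a transition function δ : Q × (A × V) → Q, and a set F ⊆ Q of accepting states such that for every play π = v₀ a₀ v₁ a₁ … of G, the unique run of the automaton on the infinite word (a₀,v₁)(a₁,v₂)… visits F infinitely often if and only if π has recurring certainty. -/
/-- The state reached after following the word `w` (a list of (action profile, state) pairs)
starting from state `v`: the last state of `w`, or `v` if `w` is empty. -/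
def endFrom {α V : Type} : V → List (α × V) → V
  | v, [] => v
  | _, p :: w => endFrom p.2 w

/-- An `n`-player game structure with imperfect information: states `V` with an initial state,
action sets `A i` for each player, a total move relation labelled by action profiles,
observation functions `obs i : V → B i` for each player, and the observation function
`obs0 : V → B0` of the fictitious, less informed Player 0, which is a coarsening of
every player's observation. -/
structure GameStructure (n : ℕ) (V : Type) (A : Fin n → Type) (B : Fin n → Type)
    (B0 : Type) where
  init : V
  move : V → (∀ i, A i) → V → Prop
  move_total : ∀ v a, ∃ v', move v a v'
  obs : ∀ i : Fin n, V → B i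
  obs0 : V → B0
  obs0_coarse : ∀ v v' : V, (∃ i, obs i v = obs i v') → obs0 v = obs0 v'

namespace GameStructure

variable {n : ℕ} {V : Type} {A : Fin n → Type} {B : Fin n → Type} {B0 : Type}

variable (G : GameStructure n V A B B0)

/-- `G.IsHistFrom v w` holds if the word `w` describes a sequence of legal moves from `v`. -/
def IsHistFrom : V → List ((∀ i, A i) × V) → Prop
  | _, [] => True
  | v, p :: w => G.move v p.1 p.2 ∧ IsHistFrom p.2 w

/-- `w` encodes a history: a legal sequence of moves from the initial state.
The history `v₀ a₀ v₁ … a_{ℓ-1} v_ℓ` is encoded as the word `(a₀,v₁) … (a_{ℓ-1},v_ℓ)`. -/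
def IsHistWord (w : List ((∀ i, A i) × V)) : Prop := G.IsHistFrom G.init w

/-- The final state of the history encoded by `w`. -/
def endState (w : List ((∀ i, A i) × V)) : V := endFrom G.init w

/-- The sequence of Player 0's observations of the states of the history encoded by `w`
(the observation of the initial state is omitted, as it is fixed). Two histories are
`∼⁰`-indistinguishable iff their `obs0Trace`s are equal (which forces equal length). -/
def obs0Trace (w : List ((∀ i, A i) × V)) : List B0 := w.map fun p => G.obs0 p.2

/-- The grand coalition attains certainty at the history `w`: every history
`∼⁰`-indistinguishable from `w` ends at the same state. -/
def Certain (w : List ((∀ i, A i) × V)) : Prop :=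
  ∀ w', G.IsHistWord w' → G.obs0Trace w' = G.obs0Trace w → G.endState w' = G.endState w

/-- A play: an infinite legal sequence of states and action profiles from the initial state. -/
structure Play (G : GameStructure n V A B B0) where
  st : ℕ → V
  act : ℕ → ∀ i, A i
  init_eq : st 0 = G.init
  valid : ∀ k, G.move (st k) (act k) (st (k + 1))

/-- The word encoding the prefix history of length `ℓ` of the play `π`. -/
def Play.prefixWord {G : GameStructure n V A B B0} (π : G.Play) (ℓ : ℕ) :
    List ((∀ i, A i) × V) :=
  (List.range ℓ).map fun k => (π.act k, π.st (k + 1))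

/-- The play `π` has recurring certainty: the grand coalition attains certainty at
infinitely many of its finite prefixes. -/
def Play.HasRecurringCertainty {G : GameStructure n V A B B0} (π : G.Play) : Prop :=
  ∀ m : ℕ, ∃ ℓ, m ≤ ℓ ∧ G.Certain (π.prefixWord ℓ)

/-- The game structure `G` has recurring certainty: every play does. -/
def RecurringCertainty : Prop := ∀ π : G.Play, π.HasRecurringCertainty

/-- `G` has periodic certainty with bound `t`: along every play, every prefix history can be
extended by at most `t` further rounds, within the play, to a history at which the grand
coalition attains certainty. -/
def PeriodicWithBound (t : ℕ) : Prop :=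
  ∀ π : G.Play, ∀ m : ℕ, ∃ ℓ, m ≤ ℓ ∧ ℓ ≤ m + t ∧ G.Certain (π.prefixWord ℓ)

/-- `G` has periodic certainty: periodic certainty with some uniform bound `t`. -/
def PeriodicCertainty : Prop := ∃ t, G.PeriodicWithBound t

end GameStructure

/-- The run of a deterministic automaton with transition function `δ` and initial state `q0`
on an infinite word `x`: `runDet δ q0 x k` is the state reached after reading `k` letters. -/
def runDet {Q σ : Type} (δ : Q → σ → Q) (q0 : Q) (x : ℕ → σ) : ℕ → Q
  | 0 => q0
  | k + 1 => δ (runDet δ q0 x k) (x k)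

/-- The `k`-th letter of the play `π`, viewed as the infinite word
`(a₀,v₁)(a₁,v₂)…` over the alphabet `A × V`. -/
def GameStructure.Play.letter {n : ℕ} {V : Type} {A : Fin n → Type} {B : Fin n → Type}
    {B0 : Type} {G : GameStructure n V A B B0} (π : G.Play) (k : ℕ) : (∀ i, A i) × V :=
  (π.act k, π.st (k + 1))


/-! Subset construction. Player 0's knowledge after a history, the set of states ending some
history with the same observation trace, is computed letter by letter: take all successors of the
current set and keep those carrying the newly observed observation. The grand coalition is certain
at a history exactly when this set is a singleton, so the deterministic automaton with states
`Set V` computing knowledge sets and accepting at the subsingletons recognises recurring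
certainty. -/

lemma runDet_eq_foldl {Q σ : Type} (δ : Q → σ → Q) (q0 : Q) (x : ℕ → σ) (ℓ : ℕ) :
    runDet δ q0 x ℓ = ((List.range ℓ).map x).foldl δ q0 := by
  induction ℓ with
  | zero => rfl
  | succ ℓ ih => simp [runDet, ih, List.range_succ]

lemma endFrom_append {α V : Type} (v : V) (w₁ w₂ : List (α × V)) :
    endFrom v (w₁ ++ w₂) = endFrom (endFrom v w₁) w₂ := by
  induction w₁ generalizing v with
  | nil => rfl
  | cons p w ih => exact ih p.2

namespace GameStructure

variable {n : ℕ} {V : Type} {A : Fin n → Type} {B : Fin n → Type} {B0 : Type}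
variable (G : GameStructure n V A B B0)

lemma isHistFrom_append (v : V) (w₁ w₂ : List ((∀ i, A i) × V)) :
    G.IsHistFrom v (w₁ ++ w₂) ↔
      G.IsHistFrom v w₁ ∧ G.IsHistFrom (endFrom v w₁) w₂ := by
  induction w₁ generalizing v with
  | nil => simp [IsHistFrom, endFrom]
  | cons p w ih => simp [IsHistFrom, endFrom, ih, and_assoc]

lemma isHistWord_concat {w : List ((∀ i, A i) × V)} {p : (∀ i, A i) × V} :
    G.IsHistWord (w ++ [p]) ↔ G.IsHistWord w ∧ G.move (G.endState w) p.1 p.2 := by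
  simp [IsHistWord, isHistFrom_append, IsHistFrom, endState]

lemma endState_concat (w : List ((∀ i, A i) × V)) (p : (∀ i, A i) × V) :
    G.endState (w ++ [p]) = p.2 := by
  simp [endState, endFrom_append, endFrom]

def knowledge (tr : List B0) : Set V :=
  {v | ∃ w, G.IsHistWord w ∧ G.obs0Trace w = tr ∧ G.endState w = v}

def knowledgeUpdate (S : Set V) (b : B0) : Set V :=
  {v' | G.obs0 v' = b ∧ ∃ u ∈ S, ∃ a, G.move u a v'}

lemma knowledge_nil : G.knowledge [] = {G.init} := by
  ext v
  constructor
  · rintro ⟨w, -, htr, rfl⟩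
    rw [List.map_eq_nil_iff.mp htr]
    rfl
  · rintro rfl
    exact ⟨[], trivial, rfl, rfl⟩

lemma knowledge_concat (tr : List B0) (b : B0) :
    G.knowledge (tr ++ [b]) = G.knowledgeUpdate (G.knowledge tr) b := by
  ext v'
  constructor
  · rintro ⟨w, hw, htr, rfl⟩
    simp only [obs0Trace, List.map_eq_append_iff, List.map_eq_singleton_iff] at htr
    obtain ⟨w₀, _, rfl, htr₀, p, rfl, hb⟩ := htr
    rw [isHistWord_concat] at hw
    rw [endState_concat]
    exact ⟨hb, G.endState w₀, ⟨w₀, hw.1, htr₀, rfl⟩, p.1, hw.2⟩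
  · rintro ⟨hb, u, ⟨w₀, hw₀, rfl, rfl⟩, a, hmove⟩
    refine ⟨w₀ ++ [(a, v')], G.isHistWord_concat.mpr ⟨hw₀, hmove⟩, ?_,
      G.endState_concat _ _⟩
    simp [obs0Trace, hb]

lemma knowledge_eq_foldl (tr : List B0) :
    G.knowledge tr = tr.foldl G.knowledgeUpdate {G.init} := by
  induction tr using List.reverseRecOn with
  | nil => exact G.knowledge_nil
  | append_singleton tr b ih => rw [knowledge_concat, ih, List.foldl_concat]

lemma certain_iff_knowledge_subsingleton {w : List ((∀ i, A i) × V)}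
    (hw : G.IsHistWord w) :
    G.Certain w ↔ (G.knowledge (G.obs0Trace w)).Subsingleton := by
  constructor
  · rintro hc _ ⟨w₁, hw₁, htr₁, rfl⟩ _ ⟨w₂, hw₂, htr₂, rfl⟩
    rw [hc w₁ hw₁ htr₁, hc w₂ hw₂ htr₂]
  · intro hs w' hw' htr'
    exact hs ⟨w', hw', htr', rfl⟩ ⟨w, hw, rfl, rfl⟩

namespace Play

variable {G} (π : G.Play)

lemma prefixWord_succ (ℓ : ℕ) :
    π.prefixWord (ℓ + 1) = π.prefixWord ℓ ++ [π.letter ℓ] := by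
  simp [prefixWord, letter, List.range_succ]

lemma endState_prefixWord (ℓ : ℕ) : G.endState (π.prefixWord ℓ) = π.st ℓ := by
  cases ℓ with
  | zero => exact π.init_eq.symm
  | succ ℓ => rw [prefixWord_succ, endState_concat]; rfl

lemma isHistWord_prefixWord (ℓ : ℕ) : G.IsHistWord (π.prefixWord ℓ) := by
  induction ℓ with
  | zero => trivial
  | succ ℓ ih =>
    rw [prefixWord_succ, isHistWord_concat, endState_prefixWord]
    exact ⟨ih, π.valid ℓ⟩

lemma runDet_knowledgeUpdate (ℓ : ℕ) :
    runDet (fun S p => G.knowledgeUpdate S (G.obs0 p.2)) {G.init} π.letter ℓ =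
      G.knowledge (G.obs0Trace (π.prefixWord ℓ)) := by
  simp only [runDet_eq_foldl, knowledge_eq_foldl, obs0Trace, prefixWord, List.foldl_map]
  rfl

end Play

end GameStructure

theorem recurringCertainty_recognisable_by_deterministic_buchi_general
    {n : ℕ} {V : Type} {A : Fin n → Type} {B : Fin n → Type} {B0 : Type}
    [Fintype V]
    (G : GameStructure n V A B B0) :
    ∃ (Q : Type) (_ : Fintype Q) (q0 : Q) (δ : Q → ((∀ i, A i) × V) → Q) (F : Set Q),
      ∀ π : G.Play,
        ((∀ m : ℕ, ∃ ℓ, m ≤ ℓ ∧ runDet δ q0 π.letter ℓ ∈ F) ↔ π.HasRecurringCertainty) := by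
  classical
  refine ⟨Set V, inferInstance, {G.init}, fun S p => G.knowledgeUpdate S (G.obs0 p.2),
    {S | S.Subsingleton},
    fun π => forall_congr' fun _ => exists_congr fun ℓ => and_congr_right' ?_⟩
  rw [π.runDet_knowledgeUpdate]
  exact (G.certain_iff_knowledge_subsingleton (π.isHistWord_prefixWord ℓ)).symm

/-- The set of plays of a finite game structure in which the grand coalition has recurring
certainty is recognisable by a deterministic Büchi automaton: there are a finite state set `Q`,
an initial state `q0`, a transition function `δ`, and accepting states `F` such that for every
play, the unique run visits `F` infinitely often iff the play has recurring certainty. -/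
theorem recurringCertainty_recognisable_by_deterministic_buchi
    {n : ℕ} {V : Type} {A : Fin n → Type} {B : Fin n → Type} {B0 : Type}
    (hn : 1 ≤ n) [Fintype V] [∀ i, Fintype (A i)] [∀ i, Nonempty (A i)]
    [∀ i, Fintype (B i)] [Fintype B0]
    (G : GameStructure n V A B B0) :
    ∃ (Q : Type) (_ : Fintype Q) (q0 : Q) (δ : Q → ((∀ i, A i) × V) → Q) (F : Set Q),
      ∀ π : G.Play,
        ((∀ m : ℕ, ∃ ℓ, m ≤ ℓ ∧ runDet δ q0 π.letter ℓ ∈ F) ↔ π.HasRecurringCertainty) :=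
  recurringCertainty_recognisable_by_deterministic_buchi_general G
end

section
/- For every finite game structure G, the set of finite words over the alphabet A × V that encode histories of G at which the grand coalition does NOT attain certainty is a regular language, recognised by a nondeterministic finite automaton with at most |V|² + 1 states (pairs of game states tracking the input history and a nondeterministically guessed ∼^0-indistinguishable witness history ending at a different state, plus one sink state). -/
/-! A history is uncertain iff some `∼⁰`-indistinguishable history ends at a different state.
An automaton reading the history can guess such a witness one move at a time, remembering only
the current end of the input and the current end of the witness; it accepts when the two
differ. So `|V|²` states suffice. -/

namespace GameStructure

variable {n : ℕ} {V : Type} {A : Fin n → Type} {B : Fin n → Type} {B0 : Type}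
  (G : GameStructure n V A B B0)

@[simp]
lemma obs0Trace_nil : G.obs0Trace [] = [] := rfl

@[simp]
lemma obs0Trace_cons (p : (∀ i, A i) × V) (w : List ((∀ i, A i) × V)) :
    G.obs0Trace (p :: w) = G.obs0 p.2 :: G.obs0Trace w := rfl

@[simp]
lemma obs0Trace_eq_nil {w : List ((∀ i, A i) × V)} : G.obs0Trace w = [] ↔ w = [] :=
  List.map_eq_nil_iff

lemma exists_isHistFrom_obs0Trace_eq_cons {v : V} {b : B0} {t : List B0} {P : V → Prop} :
    (∃ w, G.IsHistFrom v w ∧ G.obs0Trace w = b :: t ∧ P (endFrom v w)) ↔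
      ∃ a u, G.move v a u ∧ G.obs0 u = b ∧
        ∃ w, G.IsHistFrom u w ∧ G.obs0Trace w = t ∧ P (endFrom u w) := by
  constructor
  · rintro ⟨_ | ⟨⟨a, u⟩, w⟩, hw, htrace, hP⟩
    · simp at htrace
    · simp only [obs0Trace_cons, List.cons.injEq] at htrace
      exact ⟨a, u, hw.1, htrace.1, w, hw.2, htrace.2, hP⟩
  · rintro ⟨a, u, hmove, hobs, w, hw, htrace, hP⟩
    exact ⟨(a, u) :: w, ⟨hmove, hw⟩, by simp [hobs, htrace], hP⟩

def uncertaintyNFA : NFA ((∀ i, A i) × V) (V × V) where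
  step q p :=
    { q' | q'.1 = p.2 ∧ G.move q.1 p.1 p.2 ∧
        ∃ a, G.move q.2 a q'.2 ∧ G.obs0 q'.2 = G.obs0 p.2 }
  start := {(G.init, G.init)}
  accept := { q | q.1 ≠ q.2 }

@[simp]
lemma mem_uncertaintyNFA_step {q q' : V × V} {p : (∀ i, A i) × V} :
    q' ∈ G.uncertaintyNFA.step q p ↔
      q'.1 = p.2 ∧ G.move q.1 p.1 p.2 ∧ ∃ a, G.move q.2 a q'.2 ∧ G.obs0 q'.2 = G.obs0 p.2 :=
  Iff.rfl

lemma mem_evalFrom_uncertaintyNFA (w : List ((∀ i, A i) × V)) (v v' : V) (q : V × V) :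
    q ∈ G.uncertaintyNFA.evalFrom {(v, v')} w ↔
      G.IsHistFrom v w ∧ q.1 = endFrom v w ∧
        ∃ w', G.IsHistFrom v' w' ∧ G.obs0Trace w' = G.obs0Trace w ∧ q.2 = endFrom v' w' := by
  induction w generalizing v v' with
  | nil => simp [IsHistFrom, endFrom, Prod.ext_iff]
  | cons p w ih =>
    simp only [NFA.evalFrom_cons, NFA.stepSet_singleton, NFA.mem_evalFrom_iff_exists, ih,
      obs0Trace_cons, exists_isHistFrom_obs0Trace_eq_cons, IsHistFrom, endFrom]
    constructor
    · rintro ⟨⟨u, u'⟩, ⟨rfl, hmove, a, hmove', hobs⟩, hw, hq, hwit⟩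
      exact ⟨⟨hmove, hw⟩, hq, a, u', hmove', hobs, hwit⟩
    · rintro ⟨⟨hmove, hw⟩, hq, a, u', hmove', hobs, hwit⟩
      exact ⟨(p.2, u'), ⟨rfl, hmove, a, hmove', hobs⟩, hw, hq, hwit⟩

lemma mem_accepts_uncertaintyNFA (w : List ((∀ i, A i) × V)) :
    w ∈ G.uncertaintyNFA.accepts ↔ G.IsHistWord w ∧ ¬ G.Certain w := by
  change (∃ q : V × V, q.1 ≠ q.2 ∧ q ∈ G.uncertaintyNFA.evalFrom {(G.init, G.init)} w) ↔ _
  simp only [mem_evalFrom_uncertaintyNFA, Prod.exists, Certain, not_forall]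
  constructor
  · rintro ⟨_, _, hne, hw, rfl, w', hw', htrace, rfl⟩
    exact ⟨hw, w', hw', htrace, hne.symm⟩
  · rintro ⟨hw, w', hw', htrace, hne⟩
    exact ⟨_, _, Ne.symm hne, hw, rfl, w', hw', htrace, rfl⟩

end GameStructure

theorem uncertain_histories_recognisable_by_nfa_general
    {n : ℕ} {V : Type} {A : Fin n → Type} {B : Fin n → Type} {B0 : Type}
    [Fintype V]
    (G : GameStructure n V A B B0) :
    ∃ (Q : Type) (_ : Fintype Q) (M : NFA ((∀ i, A i) × V) Q),
      Fintype.card Q ≤ Fintype.card V ^ 2 + 1 ∧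
      ∀ w : List ((∀ i, A i) × V),
        w ∈ M.accepts ↔ (G.IsHistWord w ∧ ¬ G.Certain w) := by
  refine ⟨V × V, inferInstance, G.uncertaintyNFA, ?_, G.mem_accepts_uncertaintyNFA⟩
  rw [Fintype.card_prod, ← sq]
  exact Nat.le_succ _

/-- The set of words over `A × V` encoding histories at which the grand coalition does NOT
attain certainty is regular, recognised by an NFA with at most `|V|² + 1` states. -/
theorem uncertain_histories_recognisable_by_nfa
    {n : ℕ} {V : Type} {A : Fin n → Type} {B : Fin n → Type} {B0 : Type}
    (hn : 1 ≤ n) [Fintype V] [∀ i, Fintype (A i)] [∀ i, Nonempty (A i)]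
    [∀ i, Fintype (B i)] [Fintype B0]
    (G : GameStructure n V A B B0) :
    ∃ (Q : Type) (_ : Fintype Q) (M : NFA ((∀ i, A i) × V) Q),
      Fintype.card Q ≤ Fintype.card V ^ 2 + 1 ∧
      ∀ w : List ((∀ i, A i) × V),
        w ∈ M.accepts ↔ (G.IsHistWord w ∧ ¬ G.Certain w) :=
  uncertain_histories_recognisable_by_nfa_general G
end

section
/- A finite game structure G has recurring certainty if and only if it has periodic certainty. -/
namespace GameStructure

variable {n : ℕ} {V : Type} {A : Fin n → Type} {B : Fin n → Type} {B0 : Type}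
variable (G : GameStructure n V A B B0)

lemma endFrom_append {α : Type} (v : V) (w₁ w₂ : List (α × V)) :
    endFrom v (w₁ ++ w₂) = endFrom (endFrom v w₁) w₂ := by
  induction w₁ generalizing v with
  | nil => rfl
  | cons p w ih => simp [endFrom, ih]

/-- The knowledge set after observation trace `τ`. -/
def know (τ : List B0) : Set V :=
  {v | ∃ w, G.IsHistWord w ∧ G.obs0Trace w = τ ∧ G.endState w = v}

/-- One-step update of the knowledge set. -/
def kstep (K : Set V) (b : B0) : Set V :=
  {v' | (∃ u ∈ K, ∃ a, G.move u a v') ∧ G.obs0 v' = b}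

lemma know_append (τ : List B0) (b : B0) :
    G.know (τ ++ [b]) = G.kstep (G.know τ) b := by
  ext v'
  constructor
  · rintro ⟨w, hw, htr, hend⟩
    rcases List.map_eq_append_iff.mp htr with ⟨w₁, w₂, rfl, htr₁, htr₂⟩
    rcases w₂ with _ | ⟨p, _ | q⟩
    · simp at htr₂
    · simp only [List.map_cons, List.map_nil, List.cons.injEq, and_true] at htr₂
      rw [IsHistWord, isHistFrom_append] at hw
      refine ⟨⟨endFrom G.init w₁, ⟨w₁, hw.1, htr₁, rfl⟩, p.1, ?_⟩, ?_⟩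
      · have := hw.2.1
        have hend' : endFrom G.init (w₁ ++ [p]) = p.2 := by
          rw [endFrom_append]; rfl
        rw [endState] at hend
        rw [hend' ] at hend
        rw [← hend]; exact this
      · rw [endState, endFrom_append] at hend
        simp [endFrom] at hend
        rw [← hend]; exact htr₂
    · simp at htr₂
  · rintro ⟨⟨u, ⟨w, hw, htr, hend⟩, a, hmove⟩, hobs⟩
    refine ⟨w ++ [(a, v')], ?_, ?_, ?_⟩
    · rw [IsHistWord, isHistFrom_append]
      exact ⟨hw, by rw [show endFrom G.init w = u from hend]; exact ⟨hmove, trivial⟩⟩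
    · show G.obs0Trace (w ++ [(a, v')]) = τ ++ [b]
      rw [obs0Trace] at htr ⊢
      rw [List.map_append, htr]
      simp [hobs]
    · rw [endState, endFrom_append]; rfl

lemma prefixWord_succ (π : G.Play) (ℓ : ℕ) :
    π.prefixWord (ℓ + 1) = π.prefixWord ℓ ++ [(π.act ℓ, π.st (ℓ + 1))] := by
  simp [Play.prefixWord, List.range_succ]

lemma endState_prefixWord (π : G.Play) (ℓ : ℕ) : G.endState (π.prefixWord ℓ) = π.st ℓ := by
  induction ℓ with
  | zero => exact π.init_eq.symm
  | succ k ih =>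
    rw [prefixWord_succ, endState, endFrom_append]
    rfl

lemma isHistWord_prefixWord (π : G.Play) (ℓ : ℕ) : G.IsHistWord (π.prefixWord ℓ) := by
  induction ℓ with
  | zero => trivial
  | succ k ih =>
    rw [prefixWord_succ, IsHistWord, isHistFrom_append]
    refine ⟨ih, ?_⟩
    have : endFrom G.init (π.prefixWord k) = π.st k := G.endState_prefixWord π k
    rw [this]
    exact ⟨π.valid k, trivial⟩

lemma obs0Trace_prefixWord_succ (π : G.Play) (ℓ : ℕ) :
    G.obs0Trace (π.prefixWord (ℓ + 1)) =
      G.obs0Trace (π.prefixWord ℓ) ++ [G.obs0 (π.st (ℓ + 1))] := by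
  rw [prefixWord_succ]; simp [obs0Trace]

/-- The knowledge set of the length-`ℓ` prefix of play `π`. -/
def playKnow (π : G.Play) (ℓ : ℕ) : Set V := G.know (G.obs0Trace (π.prefixWord ℓ))

lemma playKnow_succ (π : G.Play) (ℓ : ℕ) :
    G.playKnow π (ℓ + 1) = G.kstep (G.playKnow π ℓ) (G.obs0 (π.st (ℓ + 1))) := by
  rw [playKnow, obs0Trace_prefixWord_succ, know_append]; rfl

lemma endState_mem_know (w : List ((∀ i, A i) × V)) (hw : G.IsHistWord w) :
    G.endState w ∈ G.know (G.obs0Trace w) := ⟨w, hw, rfl, rfl⟩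

lemma certain_iff_playKnow (π : G.Play) (ℓ : ℕ) :
    G.Certain (π.prefixWord ℓ) ↔ G.playKnow π ℓ ⊆ {π.st ℓ} := by
  rw [playKnow]
  constructor
  · rintro h v ⟨w, hw, htr, hend⟩
    have := h w hw htr
    simp only [Set.mem_singleton_iff]
    rw [← hend, this, endState_prefixWord]
  · intro h w hw htr
    have : G.endState w ∈ G.know (G.obs0Trace (π.prefixWord ℓ)) := htr ▸ ⟨w, hw, rfl, rfl⟩
    have := h this
    rw [endState_prefixWord]
    exact this

end GameStructure

/-- Auxiliary index map: counts up to `j - 1`, then cycles through `[i, j-1]`. -/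
def cycIdx (i j : ℕ) : ℕ → ℕ
  | 0 => 0
  | ℓ + 1 => if cycIdx i j ℓ = j - 1 then i else cycIdx i j ℓ + 1

/-- A finite game structure has recurring certainty if and only if it has periodic certainty. -/
theorem recurringCertainty_iff_periodicCertainty
    {n : ℕ} {V : Type} {A : Fin n → Type} {B : Fin n → Type} {B0 : Type}
    (hn : 1 ≤ n) [Fintype V] [∀ i, Fintype (A i)] [∀ i, Nonempty (A i)]
    [∀ i, Fintype (B i)] [Fintype B0]
    (G : GameStructure n V A B B0) :
    G.RecurringCertainty ↔ G.PeriodicCertainty := by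
    classical
  constructor
  · -- recurring ⇒ periodic
    intro hrec
    refine ⟨Fintype.card (V × Set V), ?_⟩
    intro π m
    by_contra hcon
    push_neg at hcon
    set t := Fintype.card (V × Set V) with ht
    obtain ⟨a, b, hab, hfab⟩ := Fintype.exists_ne_map_eq_of_card_lt
      (fun k : Fin (t + 1) => (π.st (m + k), G.playKnow π (m + k)))
      (by rw [Fintype.card_fin]; exact Nat.lt_succ_self t)
    obtain ⟨i, j, hmi, hij, hjt, hst, hK⟩ :
        ∃ i j, m ≤ i ∧ i < j ∧ j ≤ m + t ∧ π.st i = π.st j ∧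
          G.playKnow π i = G.playKnow π j := by
      obtain ⟨h1, h2⟩ := Prod.ext_iff.mp hfab
      rcases lt_or_gt_of_ne hab with h | h
      · exact ⟨m + a, m + b, by omega, by
          have : (a : ℕ) < b := h
          omega, by have := b.isLt; omega, h1, h2⟩
      · exact ⟨m + b, m + a, by omega, by
          have : (b : ℕ) < a := h
          omega, by have := a.isLt; omega, h1.symm, h2.symm⟩
    -- the index map producing the pumped play
    set r : ℕ → ℕ := cycIdx i j with hrdef
    have hr0 : r 0 = 0 := rfl
    have hrsucc : ∀ ℓ, r (ℓ + 1) = if r ℓ = j - 1 then i else r ℓ + 1 := fun ℓ => rfl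
    have hrle : ∀ ℓ, r ℓ ≤ j - 1 := by
      intro ℓ
      induction ℓ with
      | zero => rw [hr0]; omega
      | succ k ih => rw [hrsucc]; split <;> omega
    have hrge : ∀ ℓ, r ℓ = ℓ ∨ i ≤ r ℓ := by
      intro ℓ
      induction ℓ with
      | zero => left; exact hr0
      | succ k ih =>
        rw [hrsucc]
        split
        · right; exact le_rfl
        · rcases ih with h | h
          · left; omega
          · right; omega
    have hstep : ∀ ℓ, π.st (r ℓ + 1) = π.st (r (ℓ + 1)) ∧
        G.playKnow π (r ℓ + 1) = G.playKnow π (r (ℓ + 1)) := by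
      intro ℓ
      rw [hrsucc]
      split
      · next h =>
        have hj : r ℓ + 1 = j := by omega
        rw [hj]
        exact ⟨hst.symm, hK.symm⟩
      · exact ⟨rfl, rfl⟩
    let π' : G.Play :=
      { st := fun ℓ => π.st (r ℓ)
        act := fun ℓ => π.act (r ℓ)
        init_eq := by show π.st (r 0) = G.init; rw [hr0]; exact π.init_eq
        valid := fun ℓ => by
          show G.move (π.st (r ℓ)) (π.act (r ℓ)) (π.st (r (ℓ + 1)))
          rw [← (hstep ℓ).1]
          exact π.valid (r ℓ) }
    have hK' : ∀ ℓ, G.playKnow π' ℓ = G.playKnow π (r ℓ) := by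
      intro ℓ
      induction ℓ with
      | zero => rw [hr0]; rfl
      | succ k ih =>
        rw [GameStructure.playKnow_succ, ih, ← (hstep k).2, GameStructure.playKnow_succ,
          show π'.st (k + 1) = π.st (r k + 1) from ((hstep k).1).symm]
    obtain ⟨ℓ, hℓ, hcert⟩ := hrec π' j
    have hri : i ≤ r ℓ := by
      rcases hrge ℓ with h | h
      · have := hrle ℓ; omega
      · exact h
    have hcert' : G.Certain (π.prefixWord (r ℓ)) := by
      rw [GameStructure.certain_iff_playKnow]
      rw [GameStructure.certain_iff_playKnow, hK'] at hcert
      intro v hv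
      exact hcert hv
    exact hcon (r ℓ) (le_trans hmi hri) (by have := hrle ℓ; omega) hcert'
  · -- periodic ⇒ recurring
    rintro ⟨t, hp⟩ π m
    obtain ⟨ℓ, h1, _, h3⟩ := hp π m
    exact ⟨ℓ, h1, h3⟩
end
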